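/- arXiv:1406.3698 — 7 statements merged into one kernel-verified Lean document; each statement's English description precedes it below -/
import Mathlib

section
/- For every real number μ > 0 and every E > 0 there exists a positive integer J such that for every prime p and every integer j ≥ J, one has max{τ(p^j + m) : m ∈ ℕ, 1 ≤ m, (m : ℝ) ≤ (p^j)^(1/μ)} > E · τ(p^j); equivalently, along any sequence n_k = p_k^{j_k} of prime powers with j_k → ∞, the ratio T_{n_k}(μ) = max_{1 ≤ m ≤ n_k^{1/μ}} τ(n_k + m) / τ(n_k) tends to infinity. -/
/-!
Round `p ^ j` up to the next multiple of `6 ^ a` with `a ≈ j / (3 μ)`. The shift `m ≤ 6 ^ a ≤ 8 ^ a`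
stays below `(p ^ j) ^ (1 / μ)`, and the new number has at least `τ (6 ^ a) = (a + 1) ^ 2` divisors,
which is quadratic in `j`, whereas `τ (p ^ j) = j + 1` is only linear.
-/

/-- `τ n` is the number of positive divisors of `n`. -/
def tau (n : ℕ) : ℕ := n.divisors.card

lemma tau_prime_pow {p : ℕ} (hp : p.Prime) (k : ℕ) : tau (p ^ k) = k + 1 := by
  rw [tau, Nat.divisors_prime_pow hp, Finset.card_map, Finset.card_range]

lemma tau_le_of_dvd {m n : ℕ} (hn : n ≠ 0) (h : m ∣ n) : tau m ≤ tau n :=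
  Finset.card_le_card (Nat.divisors_subset_of_dvd hn h)

lemma tau_six_pow (a : ℕ) : tau (6 ^ a) = (a + 1) ^ 2 := by
  have hcop : Nat.Coprime (2 ^ a) (3 ^ a) := Nat.Coprime.pow _ _ (by norm_num)
  rw [show (6 : ℕ) ^ a = 2 ^ a * 3 ^ a by rw [← mul_pow]; norm_num, tau,
    Nat.Coprime.card_divisors_mul hcop, ← tau, ← tau, tau_prime_pow Nat.prime_two,
    tau_prime_pow Nat.prime_three, sq]

lemma exists_mem_Icc_dvd_add (N : ℕ) {M : ℕ} (hM : 0 < M) : ∃ m ∈ Finset.Icc 1 M, M ∣ N + m := by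
  have hmod : N % M < M := Nat.mod_lt N hM
  refine ⟨M - N % M, Finset.mem_Icc.2 ⟨by omega, by omega⟩, ⟨N / M + 1, ?_⟩⟩
  have := Nat.div_add_mod N M
  rw [mul_add_one]
  omega

lemma six_pow_le_rpow_one_div {x μ : ℝ} (hx : 2 ≤ x) (hμ : 0 < μ) {a j : ℕ}
    (h : 3 * a * μ ≤ j) : (6 : ℝ) ^ a ≤ (x ^ j) ^ (1 / μ) := by
  have h3a : ((3 * a : ℕ) : ℝ) ≤ j / μ := by
    rw [le_div_iff₀ hμ]
    push_cast
    exact h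
  calc (6 : ℝ) ^ a ≤ (2 ^ 3) ^ a := pow_le_pow_left₀ (by norm_num) (by norm_num) a
    _ = (2 : ℝ) ^ ((3 * a : ℕ) : ℝ) := by rw [Real.rpow_natCast, pow_mul]
    _ ≤ 2 ^ ((j : ℝ) / μ) := Real.rpow_le_rpow_of_exponent_le (by norm_num) h3a
    _ ≤ x ^ ((j : ℝ) / μ) := Real.rpow_le_rpow (by norm_num) hx (by positivity)
    _ = (x ^ j) ^ (1 / μ) := by
      rw [← Real.rpow_natCast, ← Real.rpow_mul (by linarith), mul_one_div]

lemma mul_add_one_lt_div_sq {E K j : ℝ} (hK : 0 < K) (hj : 1 ≤ j) (hEj : 2 * E * K ^ 2 < j) :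
    E * (j + 1) < (j / K) ^ 2 := by
  rw [div_pow, lt_div_iff₀ (by positivity)]
  rcases le_or_gt E 0 with hE | hE
  · nlinarith
  · nlinarith

theorem tendsto_T_of_exponent_tendsto_general (μ : ℝ) (hμ : 0 < μ) (E : ℝ) :
    ∃ J : ℕ, 0 < J ∧ ∀ p j : ℕ, p.Prime → J ≤ j →
      (((Finset.Icc 1 ⌊((p ^ j : ℕ) : ℝ) ^ (1 / μ)⌋₊).sup
        (fun m => tau (p ^ j + m)) : ℕ) : ℝ) > E * (tau (p ^ j) : ℝ) := by
  have hK : 0 < 3 * μ := by positivity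
  refine ⟨⌈2 * E * (3 * μ) ^ 2⌉₊ + 1, Nat.succ_pos _, fun p j hp hJ => ?_⟩
  have hJ' : 2 * E * (3 * μ) ^ 2 < j := Nat.lt_of_ceil_lt hJ
  set a := ⌊(j : ℝ) / (3 * μ)⌋₊
  have ha : 3 * a * μ ≤ j := by
    have := Nat.floor_le (div_nonneg (Nat.cast_nonneg j) hK.le)
    rw [le_div_iff₀ hK] at this
    linarith
  obtain ⟨m, hm, hdvd⟩ := exists_mem_Icc_dvd_add (p ^ j) (pow_pos (by norm_num) a : 0 < 6 ^ a)
  obtain ⟨hm1, hmM⟩ := Finset.mem_Icc.1 hm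
  have hm' : m ∈ Finset.Icc 1 ⌊((p ^ j : ℕ) : ℝ) ^ (1 / μ)⌋₊ := by
    refine Finset.mem_Icc.2 ⟨hm1, Nat.le_floor ?_⟩
    calc (m : ℝ) ≤ (6 : ℝ) ^ a := by exact_mod_cast hmM
      _ ≤ _ := by
        rw [Nat.cast_pow]
        exact six_pow_le_rpow_one_div (by exact_mod_cast hp.two_le) hμ ha
  calc E * (tau (p ^ j) : ℝ) = E * ((j : ℝ) + 1) := by rw [tau_prime_pow hp, Nat.cast_succ]
    _ < ((j : ℝ) / (3 * μ)) ^ 2 :=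
      mul_add_one_lt_div_sq hK (by exact_mod_cast (Nat.succ_pos _).trans_le hJ) hJ'
    _ < ((a + 1 : ℕ) : ℝ) ^ 2 := by
      push_cast
      gcongr
      exact Nat.lt_floor_add_one _
    _ = (tau (6 ^ a) : ℝ) := by rw [tau_six_pow, Nat.cast_pow]
    _ ≤ (tau (p ^ j + m) : ℝ) := by
      exact_mod_cast tau_le_of_dvd (Nat.add_pos_left (pow_pos hp.pos j) m).ne' hdvd
    _ ≤ _ := by exact_mod_cast Finset.le_sup (f := fun m => tau (p ^ j + m)) hm'

/-- For every `μ > 0` and `E > 0` there is `J` such that for every prime `p` and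
`j ≥ J`, the maximum of `τ (p^j + m)` over integers `m` with `1 ≤ m` and
`(m : ℝ) ≤ (p^j)^(1/μ)` exceeds `E · τ (p^j)`. -/
theorem tendsto_T_of_exponent_tendsto (μ : ℝ) (hμ : 0 < μ) (E : ℝ) (hE : 0 < E) :
    ∃ J : ℕ, 0 < J ∧ ∀ p j : ℕ, p.Prime → J ≤ j →
      (((Finset.Icc 1 ⌊((p ^ j : ℕ) : ℝ) ^ (1 / μ)⌋₊).sup
        (fun m => tau (p ^ j + m)) : ℕ) : ℝ) > E * (tau (p ^ j) : ℝ) :=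
  tendsto_T_of_exponent_tendsto_general μ hμ E
end

section
/- For every integer μ ≥ 2 there exist a constant c > 0 and a positive integer M such that for every integer m ≥ M, ∑_{s=1}^{m} (s + 1) · Δ(μm − s) ≥ c · m² · ln(ln m). -/
/-!
For `s > m / 2` the weight `s + 1` exceeds `m / 2`, and `μ m - s` runs over an interval of
`ℓ = m - m / 2` consecutive integers. Each prime `p ≤ ℓ` divides at least `⌊ℓ / p⌋` of them, so
`Ω` sums over that interval to at least `∑_{p ≤ ℓ} ⌊ℓ / p⌋ ≥ ℓ ∑_{p ≤ ℓ} 1 / p - (ℓ + 1)`.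
Finally the Euler product gives
`log (ℓ + 1) ≤ ∑_{n ≤ ℓ} 1 / n ≤ ∏_{p ≤ ℓ} (1 - 1 / p)⁻¹ ≤ exp (2 ∑_{p ≤ ℓ} 1 / p)`,
i.e. `∑_{p ≤ ℓ} 1 / p ≥ ½ log log (ℓ + 1)`.
-/

/-- `Δ n = Ω n` is the number of prime factors of `n` counted with multiplicity. -/
def Delta (n : ℕ) : ℕ := n.primeFactorsList.length

open Finset Real

lemma inv_one_sub_le_exp_two_mul {x : ℝ} (hx₀ : 0 ≤ x) (hx : x ≤ 1 / 2) :
    (1 - x)⁻¹ ≤ exp (2 * x) := by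
  calc (1 - x)⁻¹ ≤ 2 * x + 1 := by
        rw [inv_le_iff_one_le_mul₀ (by linarith)]
        nlinarith
    _ ≤ exp (2 * x) := add_one_le_exp _

lemma sum_Icc_inv_le_prod_primesBelow (N : ℕ) :
    ∑ n ∈ Icc 1 N, (n : ℝ)⁻¹ ≤ ∏ p ∈ (N + 1).primesBelow, (1 - (p : ℝ)⁻¹)⁻¹ := by
  let f : ℕ →* ℝ := invMonoidHom.comp (Nat.castRingHom ℝ : ℕ →* ℝ)
  have hf (n : ℕ) : f n = (n : ℝ)⁻¹ := rfl
  have hf_lt_one {p : ℕ} (hp : p.Prime) : ‖f p‖ < 1 := by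
    simpa [hf, abs_inv] using inv_lt_one_of_one_lt₀ (Nat.one_lt_cast.2 hp.one_lt)
  have hsum :=
    (EulerProduct.summable_and_hasSum_smoothNumbers_prod_primesBelow_geometric hf_lt_one (N + 1)).2
  replace hsum := (hasSum_subtype_iff_indicator (f := fun n : ℕ ↦ (n : ℝ)⁻¹)).1 hsum
  calc ∑ n ∈ Icc 1 N, (n : ℝ)⁻¹
      = ∑ n ∈ Icc 1 N, (N + 1).smoothNumbers.indicator (fun n : ℕ ↦ (n : ℝ)⁻¹) n := by
        refine sum_congr rfl fun n hn ↦ ?_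
        have := mem_Icc.1 hn
        rw [Set.indicator_of_mem (Nat.mem_smoothNumbers_of_lt (by omega) (by omega))]
    _ ≤ _ := sum_le_hasSum _ (fun n _ ↦ Set.indicator_nonneg (fun _ _ ↦ by positivity) _) hsum

lemma log_log_le_two_mul_sum_primesBelow_inv {N : ℕ} (hN : 1 ≤ N) :
    log (log (N + 1)) ≤ 2 * ∑ p ∈ (N + 1).primesBelow, (p : ℝ)⁻¹ := by
  have hlog : 0 < log (N + 1) := log_pos (by norm_cast; omega)
  rw [log_le_iff_le_exp hlog, mul_sum, exp_sum]
  calc log (N + 1) ≤ ∑ n ∈ Icc 1 N, (n : ℝ)⁻¹ := by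
        simpa [harmonic_eq_sum_Icc] using log_add_one_le_harmonic N
    _ ≤ ∏ p ∈ (N + 1).primesBelow, (1 - (p : ℝ)⁻¹)⁻¹ := sum_Icc_inv_le_prod_primesBelow N
    _ ≤ ∏ p ∈ (N + 1).primesBelow, exp (2 * (p : ℝ)⁻¹) := by
        have hinv (p) (hp : p ∈ (N + 1).primesBelow) : (p : ℝ)⁻¹ ≤ 1 / 2 := by
          rw [one_div]
          exact inv_anti₀ two_pos (by exact_mod_cast Nat.two_le_of_mem_primesBelow hp)
        exact prod_le_prod (fun p hp ↦ inv_nonneg.2 (by linarith [hinv p hp]))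
          fun p hp ↦ inv_one_sub_le_exp_two_mul (by positivity) (hinv p hp)

lemma card_filter_dvd_Ioc (p : ℕ) {a b : ℕ} (hab : a ≤ b) :
    #{n ∈ Ioc a b | p ∣ n} = b / p - a / p := by
  have hsplit := Nat.Ioc_filter_dvd_card_eq_div b p
  rw [← Ioc_union_Ioc_eq_Ioc (Nat.zero_le a) hab, filter_union,
    card_union_of_disjoint (disjoint_filter_filter (Ioc_disjoint_Ioc_of_le le_rfl)),
    Nat.Ioc_filter_dvd_card_eq_div] at hsplit
  omega

lemma card_filter_dvd_le_Delta {P : Finset ℕ} (hP : ∀ p ∈ P, p.Prime) {n : ℕ} (hn : n ≠ 0) :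
    #{p ∈ P | p ∣ n} ≤ Delta n :=
  calc #{p ∈ P | p ∣ n} ≤ #n.primeFactors :=
        card_le_card fun p hp ↦ by
          rw [mem_filter] at hp
          exact Nat.mem_primeFactors.2 ⟨hP p hp.1, hp.2, hn⟩
    _ ≤ Delta n := List.toFinset_card_le _

lemma sum_div_le_sum_Delta_Ioc {P : Finset ℕ} (hP : ∀ p ∈ P, p.Prime) (a ℓ : ℕ) :
    ∑ p ∈ P, ℓ / p ≤ ∑ n ∈ Ioc a (a + ℓ), Delta n :=
  calc ∑ p ∈ P, ℓ / p ≤ ∑ p ∈ P, #{n ∈ Ioc a (a + ℓ) | p ∣ n} :=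
        sum_le_sum fun p _ ↦ by
          rw [card_filter_dvd_Ioc p (Nat.le_add_right a ℓ)]
          have := Nat.div_add_div_le_add_div (x := a) (y := ℓ) (z := p)
          omega
    _ = ∑ n ∈ Ioc a (a + ℓ), #{p ∈ P | p ∣ n} :=
        sum_card_bipartiteAbove_eq_sum_card_bipartiteBelow _
    _ ≤ ∑ n ∈ Ioc a (a + ℓ), Delta n :=
        sum_le_sum fun n hn ↦ card_filter_dvd_le_Delta hP (by have := (mem_Ioc.1 hn).1; omega)

lemma cast_div_sub_one_le (ℓ p : ℕ) : (ℓ : ℝ) / p - 1 ≤ ((ℓ / p : ℕ) : ℝ) := by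
  rw [← Nat.floor_div_eq_div (K := ℝ)]
  exact (Nat.sub_one_lt_floor _).le

lemma sum_Delta_Ioc_ge (a : ℕ) {ℓ : ℕ} (hℓ : 1 ≤ ℓ) :
    (ℓ : ℝ) / 2 * log (log (ℓ + 1)) - (ℓ + 1) ≤ ∑ n ∈ Ioc a (a + ℓ), (Delta n : ℝ) := by
  set P := (ℓ + 1).primesBelow
  have hcard : (#P : ℝ) ≤ ℓ + 1 := by
    exact_mod_cast (card_filter_le _ _).trans_eq (card_range (ℓ + 1))
  have hmertens := log_log_le_two_mul_sum_primesBelow_inv hℓ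
  calc (ℓ : ℝ) / 2 * log (log (ℓ + 1)) - (ℓ + 1)
      ≤ ℓ * ∑ p ∈ P, (p : ℝ)⁻¹ - #P := by nlinarith [(Nat.cast_nonneg ℓ : (0 : ℝ) ≤ ℓ)]
    _ = ∑ p ∈ P, ((ℓ : ℝ) / p - 1) := by simp [mul_sum, sum_sub_distrib, div_eq_mul_inv]
    _ ≤ ∑ p ∈ P, ((ℓ / p : ℕ) : ℝ) := sum_le_sum fun p _ ↦ cast_div_sub_one_le ℓ p
    _ ≤ ∑ n ∈ Ioc a (a + ℓ), (Delta n : ℝ) := by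
        exact_mod_cast sum_div_le_sum_Delta_Ioc (fun p ↦ Nat.prime_of_mem_primesBelow) a ℓ

lemma log_log_sub_one_le_log_log {x y : ℝ} (hx : 4 ≤ x) (hxy : x ≤ 2 * y) :
    log (log x) - 1 ≤ log (log y) := by
  have hlog2 : log 2 < 1 := log_two_lt_d9.trans (by norm_num)
  have hlog4 : 2 * log 2 ≤ log x := by
    rw [← log_rpow two_pos]; exact log_le_log (by norm_num) (by norm_num; linarith)
  have hlog2pos : 0 < log 2 := log_pos one_lt_two
  have hy : log x / 2 ≤ log y := by
    have := log_le_log (by linarith) (show x / 2 ≤ y by linarith)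
    rw [log_div (by linarith) two_ne_zero] at this
    linarith
  calc log (log x) - 1 ≤ log (log x / 2) := by
        rw [log_div (by linarith) two_ne_zero]; linarith
    _ ≤ log (log y) := log_le_log (by linarith) hy

lemma mul_sum_Ioc_le_sum_Icc_mul_sub (f : ℕ → ℕ) {N m : ℕ} (hm : m < N) :
    (m / 2 + 1) * ∑ n ∈ Ioc (N - m - 1) (N - m - 1 + (m - m / 2)), f n
      ≤ ∑ s ∈ Icc 1 m, (s + 1) * f (N - s) := by
  have hreflect : ∑ n ∈ Ioc (N - m - 1) (N - m - 1 + (m - m / 2)), f n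
      = ∑ s ∈ Ioc (m / 2) m, f (N - s) := by
    refine sum_nbij' (fun n ↦ N - n) (fun s ↦ N - s) ?_ ?_ ?_ ?_ ?_ <;> intro x hx <;>
      rw [mem_Ioc] at hx
    · rw [mem_Ioc]; omega
    · rw [mem_Ioc]; omega
    · omega
    · omega
    · congr 1; omega
  calc (m / 2 + 1) * ∑ n ∈ Ioc (N - m - 1) (N - m - 1 + (m - m / 2)), f n
      = ∑ s ∈ Ioc (m / 2) m, (m / 2 + 1) * f (N - s) := by rw [hreflect, mul_sum]
    _ ≤ ∑ s ∈ Ioc (m / 2) m, (s + 1) * f (N - s) :=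
        sum_le_sum fun s hs ↦ Nat.mul_le_mul_right _ (by have := (mem_Ioc.1 hs).1; omega)
    _ ≤ ∑ s ∈ Icc 1 m, (s + 1) * f (N - s) :=
        sum_le_sum_of_subset fun s hs ↦ by simp only [mem_Ioc, mem_Icc] at hs ⊢; omega

/-- For every integer `μ ≥ 2` there are `c > 0` and `M` such that for all `m ≥ M`,
`∑_{s=1}^{m} (s+1) Δ(μm − s) ≥ c m² ln (ln m)`. -/
theorem sum_weighted_Delta_ge (μ : ℕ) (hμ : 2 ≤ μ) :
    ∃ c : ℝ, 0 < c ∧ ∃ M : ℕ, 0 < M ∧ ∀ m : ℕ, M ≤ m →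
      ((∑ s ∈ Finset.Icc 1 m, (s + 1) * Delta (μ * m - s) : ℕ) : ℝ)
        ≥ c * (m : ℝ) ^ 2 * Real.log (Real.log m) := by
  refine ⟨1 / 16, by norm_num, ⌈exp (exp 10)⌉₊, Nat.ceil_pos.2 (exp_pos _), fun m hm ↦ ?_⟩
  replace hm : exp (exp 10) ≤ m := Nat.ceil_le.1 hm
  have hm4 : (4 : ℝ) ≤ m := by linarith [add_one_le_exp 10, add_one_le_exp (exp 10)]
  have hX : 10 ≤ log (log m) := by
    rw [le_log_iff_exp_le ((exp_pos _).trans_le ((le_log_iff_exp_le (by linarith)).2 hm)),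
      le_log_iff_exp_le (by linarith)]
    exact hm
  have hm2 : 2 ≤ m := by exact_mod_cast (show (2 : ℝ) ≤ m by linarith)
  have hweighted : ((m / 2 : ℕ) + 1 : ℝ)
      * ∑ n ∈ Ioc (μ * m - m - 1) (μ * m - m - 1 + (m - m / 2)), (Delta n : ℝ)
      ≤ ((∑ s ∈ Icc 1 m, (s + 1) * Delta (μ * m - s) : ℕ) : ℝ) := by
    exact_mod_cast mul_sum_Ioc_le_sum_Icc_mul_sub Delta (show m < μ * m by nlinarith)
  set ℓ := m - m / 2
  set W := ∑ n ∈ Ioc (μ * m - m - 1) (μ * m - m - 1 + ℓ), (Delta n : ℝ)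
  have hwindow := sum_Delta_Ioc_ge (μ * m - m - 1) (show 1 ≤ ℓ by omega)
  have hloglog := log_log_sub_one_le_log_log (y := ℓ + 1) hm4 (by norm_cast; omega)
  have hhalf : (m : ℝ) / 2 ≤ (m / 2 : ℕ) + 1 := by
    rw [div_le_iff₀ two_pos]; norm_cast; omega
  have hℓ : (m : ℝ) ≤ 2 * ℓ := by norm_cast; omega
  have hℓm : (ℓ : ℝ) + 1 ≤ m := by norm_cast; omega
  have hW : m * log (log m) / 8 ≤ W := by nlinarith
  calc 1 / 16 * (m : ℝ) ^ 2 * log (log m) = m / 2 * (m * log (log m) / 8) := by ring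
    _ ≤ ((m / 2 : ℕ) + 1) * W := by gcongr
    _ ≤ _ := hweighted
end

section
/- For every integer μ ≥ 2 there exist a constant c > 0 and a positive integer M such that for every integer m ≥ M there exists s₀ ∈ {1, 2, …, m} with (s₀ + 1) · Δ(μm − s₀) ≥ c · m · ln(ln m). -/
lemma factorization_le_Delta (n p : ℕ) : n.factorization p ≤ Delta n :=
  Nat.primeFactorsList_count_eq (n := n) (p := p) ▸ List.count_le_length

lemma le_Delta_of_pow_dvd {p k n : ℕ} (hp : p.Prime) (hn : n ≠ 0) (h : p ^ k ∣ n) :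
    k ≤ Delta n :=
  ((hp.pow_dvd_iff_le_factorization hn).mp h).trans (factorization_le_Delta n p)

lemma exists_dvd_and_lt_and_le_add (a : ℕ) {q : ℕ} (hq : 0 < q) :
    ∃ N, q ∣ N ∧ a < N ∧ N ≤ a + q :=
  ⟨a / q * q + q, ⟨a / q + 1, by ring⟩, Nat.lt_div_mul_add hq,
    by have := Nat.div_mul_le_self a q; omega⟩

lemma exists_mem_Icc_le_add_pow_and_le_Delta {μ m p k : ℕ} (hμ : 1 ≤ μ) (hp : p.Prime)
    (hk : p ^ k < m) :
    ∃ s ∈ Finset.Icc 1 m, m ≤ s + p ^ k ∧ k ≤ Delta (μ * m - s) := by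
  have hmμ : m ≤ μ * m := Nat.le_mul_of_pos_left m hμ
  obtain ⟨N, hdvd, hlt, hle⟩ := exists_dvd_and_lt_and_le_add (μ * m - m) (pow_pos hp.pos k)
  refine ⟨μ * m - N, Finset.mem_Icc.mpr ⟨by omega, by omega⟩, by omega, ?_⟩
  rw [show μ * m - (μ * m - N) = N by omega]
  exact le_Delta_of_pow_dvd hp (by omega) hdvd

lemma exists_mem_Icc_mul_log_le_Delta {μ m : ℕ} (hμ : 1 ≤ μ) (hm : 4 ≤ m) :
    ∃ s ∈ Finset.Icc 1 m, m * Nat.log 2 m ≤ 4 * ((s + 1) * Delta (μ * m - s)) := by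
  set L := Nat.log 2 m
  have hL : 2 ≤ L := Nat.le_log_of_pow_le (by norm_num) (by omega)
  have hpow : 2 * 2 ^ (L - 1) ≤ m := by
    rw [← pow_succ', Nat.sub_add_cancel (by omega : 1 ≤ L)]
    exact Nat.pow_log_le_self 2 (by omega)
  obtain ⟨s, hs, hms, hΔ⟩ :=
    exists_mem_Icc_le_add_pow_and_le_Delta hμ Nat.prime_two (by omega : 2 ^ (L - 1) < m)
  refine ⟨s, hs, ?_⟩
  have hm2s : m ≤ 2 * s := by omega
  calc m * L ≤ m * (2 * (L - 1)) := Nat.mul_le_mul_left m (by omega)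
    _ ≤ 2 * s * (2 * (L - 1)) := Nat.mul_le_mul_right _ hm2s
    _ = 4 * (s * (L - 1)) := by ring
    _ ≤ 4 * ((s + 1) * Delta (μ * m - s)) := by gcongr; omega

lemma log_log_natCast_lt_natLog_two {m : ℕ} (hm : 2 ≤ m) :
    Real.log (Real.log m) < Nat.log 2 m := by
  have hm' : (2 : ℝ) ≤ m := by exact_mod_cast hm
  have hlogm : 0 < Real.log m := Real.log_pos (by linarith)
  have hlt : (m : ℝ) < 2 ^ (Nat.log 2 m + 1) := by
    exact_mod_cast Nat.lt_pow_succ_log_self (by norm_num) m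
  have hlog_lt : Real.log m < (Nat.log 2 m + 1) * Real.log 2 := by
    simpa [Real.log_pow] using Real.log_lt_log (by linarith) hlt
  have hlog2 : Real.log 2 < 1 := by linarith [Real.log_two_lt_d9]
  have hL : (0 : ℝ) ≤ Nat.log 2 m := Nat.cast_nonneg _
  nlinarith [Real.log_le_sub_one_of_pos hlogm]

/-- For every integer `μ ≥ 2` there are `c > 0` and `M` such that for all `m ≥ M`
there exists `s₀ ∈ {1, …, m}` with `(s₀+1) Δ(μm − s₀) ≥ c m ln (ln m)`. -/
theorem exists_good_s (μ : ℕ) (hμ : 2 ≤ μ) :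
    ∃ c : ℝ, 0 < c ∧ ∃ M : ℕ, 0 < M ∧ ∀ m : ℕ, M ≤ m →
      ∃ s₀ ∈ Finset.Icc 1 m,
        (((s₀ + 1) * Delta (μ * m - s₀) : ℕ) : ℝ)
          ≥ c * (m : ℝ) * Real.log (Real.log m) := by
  refine ⟨1 / 4, by norm_num, 4, by norm_num, fun m hm => ?_⟩
  obtain ⟨s, hs, hle⟩ := exists_mem_Icc_mul_log_le_Delta (by omega : 1 ≤ μ) hm
  refine ⟨s, hs, ?_⟩
  have hleR : (m : ℝ) * Nat.log 2 m ≤ 4 * (((s + 1) * Delta (μ * m - s) : ℕ) : ℝ) := by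
    exact_mod_cast hle
  have hm0 : (0 : ℝ) ≤ m := Nat.cast_nonneg m
  nlinarith [log_log_natCast_lt_natLog_two (by omega : 2 ≤ m)]
end

section
/- For every integer μ ≥ 2, every real β > 0, and every real ε > 0, there exists a positive integer M such that for every integer m ≥ M, ∑ over those s ∈ {1, 2, …, m} with ν₂(μm − s) > β · ln(ln m) of (s + 1) · Δ(μm − s) is at most ε · m² · ln(ln m). -/
open Finset Real Filter
open ArithmeticFunction hiding log
open scoped ArithmeticFunction.Omega Nat

lemma delta_eq_cardFactors (n : ℕ) : Delta n = Ω n := cardFactors_apply.symm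

lemma lt_and_pow_ceil_dvd_sub_of_lt_padicValNat {p N s : ℕ} {r : ℝ} (hr : 0 ≤ r)
    (h : r < padicValNat p (N - s)) : s < N ∧ p ^ ⌈r⌉₊ ∣ N - s := by
  have hν : 0 < padicValNat p (N - s) := by exact_mod_cast hr.trans_lt h
  exact ⟨Nat.sub_pos_iff_lt.mp (Nat.pos_of_ne_zero fun h0 => by simp [h0] at hν),
    (pow_dvd_pow p (Nat.ceil_le.mpr h.le)).trans pow_padicValNat_dvd⟩

lemma sum_Icc_cardFactors (n : ℕ) : ∑ t ∈ Icc 1 n, Ω t = Ω n ! := by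
  induction n with
  | zero => simp
  | succ n ih =>
    rw [sum_Icc_succ_top (by omega), ih, Nat.factorial_succ,
      cardFactors_mul n.succ_ne_zero (Nat.factorial_ne_zero n), add_comm]

section MultiplesInInterval

variable {S : Finset ℕ} {N d : ℕ}

lemma injOn_sub_div (hS : ∀ s ∈ S, s < N ∧ d ∣ N - s) :
    Set.InjOn (fun s => (N - s) / d) S := by
  intro s hs t ht hst
  have := (Nat.div_left_inj (hS s hs).2 (hS t ht).2).mp hst
  have := (hS s hs).1
  have := (hS t ht).1
  omega

lemma mapsTo_sub_div (hS : ∀ s ∈ S, s < N ∧ d ∣ N - s) :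
    Set.MapsTo (fun s => (N - s) / d) S (Icc 1 (N / d)) := by
  intro s hs
  obtain ⟨hsN, hd⟩ := hS s hs
  have hdpos : 0 < d := Nat.pos_of_dvd_of_pos hd (by omega)
  simp only [coe_Icc, Set.mem_Icc]
  exact ⟨(Nat.one_le_div_iff hdpos).mpr (Nat.le_of_dvd (by omega) hd),
    Nat.div_le_div_right (Nat.sub_le N s)⟩

lemma card_le_div_of_dvd_sub (hS : ∀ s ∈ S, s < N ∧ d ∣ N - s) : #S ≤ N / d := by
  simpa using card_le_card_of_injOn _ (mapsTo_sub_div hS) (injOn_sub_div hS)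

-- `Ω (N - s) = Ω d + Ω ((N - s) / d)`, and the quotients are distinct elements of `[1, N / d]`.
lemma sum_cardFactors_sub_le (hS : ∀ s ∈ S, s < N ∧ d ∣ N - s) :
    ∑ s ∈ S, Ω (N - s) ≤ #S * Ω d + Ω (N / d)! := by
  have hsplit : ∀ s ∈ S, Ω (N - s) = Ω d + Ω ((N - s) / d) := by
    intro s hs
    have hquot := mapsTo_sub_div hS hs
    simp only [coe_Icc, Set.mem_Icc] at hquot
    obtain ⟨hsN, hd⟩ := hS s hs
    have hd0 : d ≠ 0 := by rintro rfl; simp at hd; omega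
    rw [← cardFactors_mul hd0 (by omega), Nat.mul_div_cancel' hd]
  rw [sum_congr rfl hsplit, sum_add_distrib, sum_const, smul_eq_mul, ← sum_Icc_cardFactors,
    ← sum_image (injOn_sub_div hS)]
  gcongr
  exact image_subset_iff.mpr (mapsTo_sub_div hS)

end MultiplesInInterval

lemma sum_mul_cardFactors_sub_le {S : Finset ℕ} {m N d : ℕ}
    (hS : ∀ s ∈ S, s ≤ m ∧ s < N ∧ d ∣ N - s) :
    ∑ s ∈ S, (s + 1) * Ω (N - s) ≤ (m + 1) * (N / d * Ω d + Ω (N / d)!) := by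
  have hS' : ∀ s ∈ S, s < N ∧ d ∣ N - s := fun s hs => (hS s hs).2
  calc ∑ s ∈ S, (s + 1) * Ω (N - s) ≤ ∑ s ∈ S, (m + 1) * Ω (N - s) :=
        sum_le_sum fun s hs => Nat.mul_le_mul_right _ (by linarith [(hS s hs).1])
    _ = (m + 1) * ∑ s ∈ S, Ω (N - s) := (mul_sum ..).symm
    _ ≤ (m + 1) * (N / d * Ω d + Ω (N / d)!) := by
        gcongr
        exact (sum_cardFactors_sub_le hS').trans
          (Nat.add_le_add_right (Nat.mul_le_mul_right _ (card_le_div_of_dvd_sub hS')) _)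

-- Chebyshev: the product of the primes in `[2^i, 2^(i+1))` is at least `(2^i)^#` and at most
-- `primorial (2^(i+1)) ≤ 4^(2^(i+1))`.
lemma mul_card_primes_Ico_two_pow_le (i : ℕ) :
    i * #{p ∈ Ico (2 ^ i) (2 ^ (i + 1)) | p.Prime} ≤ 2 ^ (i + 2) := by
  set B := {p ∈ Ico (2 ^ i) (2 ^ (i + 1)) | p.Prime}
  have hprod : ∏ p ∈ B, p ≤ primorial (2 ^ (i + 1)) := by
    refine prod_le_prod_of_subset_of_one_le' (fun p hp => ?_) fun p hp _ => ?_
    · simp only [B, mem_filter, mem_Ico] at hp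
      simp only [mem_filter, mem_range]
      exact ⟨by omega, hp.2⟩
    · exact (mem_filter.mp hp).2.one_lt.le
  have : 2 ^ (i * #B) ≤ 2 ^ 2 ^ (i + 2) :=
    calc 2 ^ (i * #B) = (2 ^ i) ^ #B := pow_mul ..
      _ ≤ ∏ p ∈ B, p := pow_card_le_prod _ _ _ fun p hp => (mem_Ico.mp (mem_filter.mp hp).1).1
      _ ≤ 4 ^ 2 ^ (i + 1) := hprod.trans (primorial_le_four_pow _)
      _ = 2 ^ 2 ^ (i + 2) := by
          rw [show 4 = 2 ^ 2 by rfl, ← pow_mul, pow_succ _ (i + 1), mul_comm]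
  exact (Nat.pow_le_pow_iff_right one_lt_two).mp this

lemma sum_inv_primes_Ico_two_pow_le (i : ℕ) :
    ∑ p ∈ {p ∈ Ico (2 ^ i : ℕ) (2 ^ (i + 1)) | p.Prime}, (p : ℝ)⁻¹ ≤ 4 / i := by
  set B := {p ∈ Ico (2 ^ i) (2 ^ (i + 1)) | p.Prime}
  rcases Nat.eq_zero_or_pos i with rfl | hi
  · rw [show B = ∅ by decide, sum_empty]; simp
  have hcard : (i : ℝ) * #B ≤ 2 ^ (i + 2) := by exact_mod_cast mul_card_primes_Ico_two_pow_le i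
  calc ∑ p ∈ B, (p : ℝ)⁻¹ ≤ #B * ((2 : ℝ) ^ i)⁻¹ := by
        rw [← nsmul_eq_mul]
        refine sum_le_card_nsmul _ _ _ fun p hp => inv_anti₀ (by positivity) ?_
        exact_mod_cast (mem_Ico.mp (mem_filter.mp hp).1).1
    _ ≤ 4 / i := by
        rw [le_div_iff₀ (by exact_mod_cast hi)]
        calc #B * ((2 : ℝ) ^ i)⁻¹ * i = i * #B / 2 ^ i := by ring
          _ ≤ 2 ^ (i + 2) / 2 ^ i := by gcongr
          _ = 4 := by rw [pow_add]; field_simp; norm_num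

lemma sum_inv_primesLE_le (n : ℕ) :
    ∑ p ∈ Nat.primesLE n, (p : ℝ)⁻¹ ≤ 4 * (1 + log (Nat.log 2 n)) := by
  set L := Nat.log 2 n
  have hmaps : ∀ p ∈ Nat.primesLE n, Nat.log 2 p ∈ Icc 1 L := fun p hp => by
    obtain ⟨hpn, hp⟩ := Nat.mem_primesLE.mp hp
    exact mem_Icc.mpr ⟨Nat.log_pos one_lt_two hp.two_le, Nat.log_mono_right hpn⟩
  have hfiber : ∀ i, {p ∈ Nat.primesLE n | Nat.log 2 p = i} ⊆
      {p ∈ Ico (2 ^ i : ℕ) (2 ^ (i + 1)) | p.Prime} := fun i p hp => by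
    obtain ⟨hpn, rfl⟩ := mem_filter.mp hp
    have hp := (Nat.mem_primesLE.mp hpn).2
    exact mem_filter.mpr ⟨mem_Ico.mpr ⟨Nat.pow_log_le_self 2 hp.ne_zero,
      Nat.lt_pow_succ_log_self one_lt_two p⟩, hp⟩
  calc ∑ p ∈ Nat.primesLE n, (p : ℝ)⁻¹
      = ∑ i ∈ Icc 1 L, ∑ p ∈ Nat.primesLE n with Nat.log 2 p = i, (p : ℝ)⁻¹ :=
        (sum_fiberwise_of_maps_to hmaps _).symm
    _ ≤ ∑ i ∈ Icc 1 L, 4 * (i : ℝ)⁻¹ := sum_le_sum fun i _ =>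
        ((sum_le_sum_of_subset_of_nonneg (hfiber i) fun _ _ _ => by positivity).trans
          (sum_inv_primes_Ico_two_pow_le i)).trans_eq (div_eq_mul_inv _ _)
    _ = 4 * harmonic L := by simp [harmonic_eq_sum_Icc, mul_sum]
    _ ≤ 4 * (1 + log L) := by gcongr; exact harmonic_le_one_add_log L

lemma log_natLog_two_le {n : ℕ} (hn : 2 ≤ n) : log (Nat.log 2 n) ≤ 1 + log (log n) := by
  have hlog2 : 1 / 2 < log 2 := by linarith [log_two_gt_d9]
  have hlogn : 0 < log n := log_pos (by exact_mod_cast hn)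
  have hL : (0 : ℝ) < Nat.log 2 n := by exact_mod_cast Nat.log_pos one_lt_two hn
  calc log (Nat.log 2 n) ≤ log (2 * log n) := by
        refine log_le_log hL ((natLog_le_logb n 2).trans ?_)
        rw [Nat.cast_ofNat, logb, div_le_iff₀ (by linarith)]
        nlinarith
    _ = log 2 + log (log n) := log_mul two_ne_zero hlogn.ne'
    _ ≤ 1 + log (log n) := by linarith [log_two_lt_d9]

lemma sum_inv_primesLE_le_log_log {n : ℕ} (hn : 2 ≤ n) :
    ∑ p ∈ Nat.primesLE n, (p : ℝ)⁻¹ ≤ 4 * (2 + log (log n)) := by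
  linarith [sum_inv_primesLE_le n, log_natLog_two_le hn]

lemma cardFactors_factorial_le {n N : ℕ} (hnN : n ≤ N) :
    (Ω n ! : ℝ) ≤ 2 * n * ∑ p ∈ Nat.primesLE N, (p : ℝ)⁻¹ := by
  have hsub : (n !).primeFactors ⊆ Nat.primesLE N := fun p hp => by
    have hp' := Nat.prime_of_mem_primeFactors hp
    exact Nat.mem_primesLE.mpr ⟨((Nat.Prime.dvd_factorial hp').mp
      (Nat.dvd_of_mem_primeFactors hp)).trans hnN, hp'⟩
  have hLegendre :
      ∀ p ∈ Nat.primesLE N, ((n !).factorization p : ℝ) ≤ 2 * n * (p : ℝ)⁻¹ := by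
    intro p hp
    have hp := (Nat.mem_primesLE.mp hp).2
    have h2p : (2 : ℝ) ≤ p := by exact_mod_cast hp.two_le
    calc ((n !).factorization p : ℝ) ≤ ((n / (p - 1) : ℕ) : ℝ) := by
          exact_mod_cast Nat.factorization_factorial_le_div_pred hp n
      _ ≤ n / (p - 1 : ℝ) := by
          rw [← Nat.cast_pred hp.pos]; exact Nat.cast_div_le
      _ ≤ 2 * n * (p : ℝ)⁻¹ := by
          rw [div_le_iff₀ (by linarith)]
          field_simp
          nlinarith
  rw [cardFactors_eq_sum_factorization, Finsupp.sum, Nat.support_factorization, Nat.cast_sum,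
    mul_sum]
  exact (sum_le_sum_of_subset_of_nonneg hsub fun _ _ _ => by positivity).trans
    (sum_le_sum hLegendre)

lemma sum_high_two_adic_le {μ m : ℕ} {β : ℝ} (hβ : 0 < β) (hμm : μ ≤ m)
    (hx : 1 ≤ log (log m)) :
    ((∑ s ∈ (Icc 1 m).filter (fun s => (padicValNat 2 (μ * m - s) : ℝ) > β * log (log m)),
        (s + 1) * Ω (μ * m - s) : ℕ) : ℝ)
      ≤ 2 * μ * (β + 33) / 2 ^ ⌈β * log (log m)⌉₊ * (m ^ 2 * log (log m)) := by
  set x := log (log m)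
  set K := ⌈β * x⌉₊
  set X := μ * m / 2 ^ K
  have hlogm : 1 < log m := (log_pos_iff (log_natCast_nonneg m)).mp (by linarith)
  have hm : (2 : ℝ) ≤ m := by
    have : (1 : ℝ) < m := by
      by_contra! h
      linarith [log_nonpos (Nat.cast_nonneg m) h]
    exact_mod_cast Nat.succ_le_of_lt (by exact_mod_cast this)
  have hβx : 0 < β * x := mul_pos hβ (by linarith)
  have hS : ∀ s ∈ (Icc 1 m).filter (fun s => (padicValNat 2 (μ * m - s) : ℝ) > β * x),
      s ≤ m ∧ s < μ * m ∧ 2 ^ K ∣ μ * m - s := fun s hs =>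
    ⟨(mem_Icc.mp (mem_filter.mp hs).1).2,
      lt_and_pow_ceil_dvd_sub_of_lt_padicValNat hβx.le (mem_filter.mp hs).2⟩
  have hcomb := sum_mul_cardFactors_sub_le hS
  rw [cardFactors_apply_prime_pow Nat.prime_two] at hcomb
  have hP : ∑ p ∈ Nat.primesLE (m ^ 2), (p : ℝ)⁻¹ ≤ 4 * (3 + x) := by
    have := sum_inv_primesLE_le_log_log (n := m ^ 2)
      (by exact_mod_cast (by nlinarith : (2 : ℝ) ≤ m ^ 2))
    rw [Nat.cast_pow, log_pow, Nat.cast_ofNat,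
      log_mul two_ne_zero (by linarith : 0 < log m).ne'] at this
    linarith [log_two_lt_d9]
  have hΩ := cardFactors_factorial_le (show X ≤ m ^ 2 from
    (Nat.div_le_self _ _).trans (by nlinarith))
  have hK : (K : ℝ) ≤ β * x + 1 := (Nat.ceil_lt_add_one hβx.le).le
  calc _ ≤ ((m : ℝ) + 1) * (X * K + Ω X !) := by exact_mod_cast hcomb
    _ ≤ 2 * m * (X * (β * x + 1) + 2 * X * (4 * (3 + x))) := by
        gcongr
        · linarith
        · exact hΩ.trans (by gcongr)
    _ = 2 * m * X * (β * x + 25 + 8 * x) := by ring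
    _ ≤ 2 * m * X * ((β + 33) * x) := by gcongr; linarith
    _ ≤ 2 * m * (μ * m / 2 ^ K) * ((β + 33) * x) := by
        refine mul_le_mul_of_nonneg_right ?_ (by nlinarith)
        gcongr
        exact_mod_cast Nat.cast_div_le
    _ = 2 * μ * (β + 33) / 2 ^ K * (m ^ 2 * x) := by ring

theorem sum_high_two_adic_small_general (μ : ℕ) (β : ℝ) (hβ : 0 < β)
    (ε : ℝ) (hε : 0 < ε) :
    ∃ M : ℕ, 0 < M ∧ ∀ m : ℕ, M ≤ m →
      ((∑ s ∈ (Finset.Icc 1 m).filter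
          (fun s => (padicValNat 2 (μ * m - s) : ℝ) > β * Real.log (Real.log m)),
          (s + 1) * Delta (μ * m - s) : ℕ) : ℝ)
        ≤ ε * (m : ℝ) ^ 2 * Real.log (Real.log m) := by
  have hx : Tendsto (fun m : ℕ => log (log m)) atTop atTop :=
    (tendsto_log_atTop.comp tendsto_log_atTop).comp tendsto_natCast_atTop_atTop
  obtain ⟨M, hM⟩ := ((hx.eventually_ge_atTop (max 1 (2 * μ * (β + 33) / ε / β))).and
    (eventually_ge_atTop μ)).exists_forall_of_atTop
  refine ⟨M + 1, M.succ_pos, fun m hm => ?_⟩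
  obtain ⟨hxm, hμm⟩ := hM m (by omega)
  rw [max_le_iff, div_le_iff₀ hβ] at hxm
  simp only [delta_eq_cardFactors]
  set x := log (log m)
  -- the crude bound `2 ^ K ≥ K ≥ β x` suffices, since `x → ∞`
  have h2K : 2 * μ * (β + 33) / ε ≤ 2 ^ ⌈β * x⌉₊ :=
    calc _ ≤ β * x := by linarith
      _ ≤ ⌈β * x⌉₊ := Nat.le_ceil _
      _ ≤ 2 ^ ⌈β * x⌉₊ := by exact_mod_cast Nat.lt_two_pow_self.le
  calc _ ≤ 2 * μ * (β + 33) / 2 ^ ⌈β * x⌉₊ * (m ^ 2 * x) :=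
        sum_high_two_adic_le hβ hμm hxm.1
    _ ≤ ε * (m ^ 2 * x) := by
        refine mul_le_mul_of_nonneg_right ?_ (by nlinarith)
        exact div_le_of_le_mul₀ (by positivity) hε.le ((div_le_iff₀' hε).mp h2K)
    _ = ε * m ^ 2 * x := by ring

/-- For every integer `μ ≥ 2`, `β > 0` and `ε > 0` there is `M` such that for all
`m ≥ M` the sum of `(s+1) Δ(μm − s)` over those `s ∈ {1, …, m}` with
`ν₂(μm − s) > β ln (ln m)` is at most `ε m² ln (ln m)`. -/
theorem sum_high_two_adic_small (μ : ℕ) (hμ : 2 ≤ μ) (β : ℝ) (hβ : 0 < β)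
    (ε : ℝ) (hε : 0 < ε) :
    ∃ M : ℕ, 0 < M ∧ ∀ m : ℕ, M ≤ m →
      ((∑ s ∈ (Finset.Icc 1 m).filter
          (fun s => (padicValNat 2 (μ * m - s) : ℝ) > β * Real.log (Real.log m)),
          (s + 1) * Delta (μ * m - s) : ℕ) : ℝ)
        ≤ ε * (m : ℝ) ^ 2 * Real.log (Real.log m) :=
  sum_high_two_adic_small_general μ β hβ ε hε
end

section
/- For every integer μ ≥ 2 there exist constants c > 0, β > 0 and a positive integer M such that for every integer m ≥ M there exists s₀ ∈ {1, 2, …, m} with ν₂(μm − s₀) ≤ β · ln(ln m) and (s₀ + 1) · Δ(μm − s₀) ≥ c · m · ln(ln m). -/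
lemma Delta_eq_cardFactors (n : ℕ) : Delta n = ArithmeticFunction.cardFactors n :=
  ArithmeticFunction.cardFactors_apply.symm

lemma exists_odd_mul_mem_Ioc {q : ℕ} (hq : Odd q) (a : ℕ) :
    ∃ t, Odd t ∧ a < t * q ∧ t * q ≤ a + 2 * q := by
  have hq₀ : 0 < q := hq.pos
  have hlt : a < (a / q + 1) * q := by
    rw [add_mul, one_mul]; exact Nat.lt_div_mul_add hq₀
  have hle : a / q * q ≤ a := Nat.div_mul_le_self a q
  rcases Nat.even_or_odd (a / q + 1) with heven | hodd
  · refine ⟨a / q + 2, by simpa [add_assoc] using heven.add_one, ?_, ?_⟩ <;> nlinarith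
  · exact ⟨a / q + 1, hodd, hlt, by nlinarith⟩

lemma exists_sub_odd_dvd {μ m q : ℕ} (hμ : 1 ≤ μ) (hq : Odd q) (hqm : 4 * q ≤ m) :
    ∃ s ∈ Finset.Icc 1 m, Odd (μ * m - s) ∧ q ∣ μ * m - s ∧ m ≤ 2 * (s + 1) := by
  obtain ⟨t, ht, hlt, hle⟩ := exists_odd_mul_mem_Ioc hq ((μ - 1) * m)
  have hμm : μ * m = (μ - 1) * m + m := by
    conv_lhs => rw [← Nat.sub_add_cancel hμ]
    ring
  have hsub : μ * m - (μ * m - t * q) = t * q := by omega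
  refine ⟨μ * m - t * q, Finset.mem_Icc.mpr ⟨by omega, by omega⟩, ?_, ?_, by omega⟩
  · rw [hsub]; exact Nat.odd_mul.mpr ⟨ht, hq⟩
  · rw [hsub]; exact dvd_mul_left q t

lemma log_le_five_mul_log_three {m : ℕ} (hm : 36 ≤ m) :
    Real.log m ≤ 5 * Nat.log 3 (m / 4) := by
  set k := Nat.log 3 (m / 4)
  have hk : 2 ≤ k := Nat.le_log_of_pow_le (by norm_num) (by omega)
  have hm_lt : m < 3 ^ (k + 3) := by
    have : m / 4 < 3 ^ k * 3 := Nat.lt_pow_succ_log_self (by norm_num : 1 < 3) (m / 4)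
    have : 3 ^ (k + 3) = 3 ^ k * 27 := by ring
    omega
  have hlog3 : Real.log 3 ≤ 2 := by
    linarith [Real.log_le_sub_one_of_pos (by norm_num : (0 : ℝ) < 3)]
  have hk' : (2 : ℝ) ≤ k := by exact_mod_cast hk
  calc Real.log m ≤ Real.log ((3 : ℝ) ^ (k + 3)) :=
        Real.log_le_log (by positivity) (by exact_mod_cast hm_lt.le)
    _ = (k + 3) * Real.log 3 := by rw [Real.log_pow]; push_cast; ring
    _ ≤ (k + 3) * 2 := by gcongr
    _ ≤ 5 * k := by linarith

lemma one_le_log_natCast {m : ℕ} (hm : 3 ≤ m) : 1 ≤ Real.log m := by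
  rw [Real.le_log_iff_exp_le (by positivity)]
  calc Real.exp 1 ≤ 3 := by linarith [Real.exp_one_lt_d9]
    _ ≤ m := by exact_mod_cast hm

/-- For every integer `μ ≥ 2` there are `c > 0`, `β > 0` and `M` such that for all
`m ≥ M` there exists `s₀ ∈ {1, …, m}` with `ν₂(μm − s₀) ≤ β ln (ln m)` and
`(s₀+1) Δ(μm − s₀) ≥ c m ln (ln m)`. -/
theorem exists_good_s_low_two_adic (μ : ℕ) (hμ : 2 ≤ μ) :
    ∃ c : ℝ, 0 < c ∧ ∃ β : ℝ, 0 < β ∧ ∃ M : ℕ, 0 < M ∧ ∀ m : ℕ, M ≤ m →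
      ∃ s₀ ∈ Finset.Icc 1 m,
        (padicValNat 2 (μ * m - s₀) : ℝ) ≤ β * Real.log (Real.log m) ∧
        (((s₀ + 1) * Delta (μ * m - s₀) : ℕ) : ℝ)
          ≥ c * (m : ℝ) * Real.log (Real.log m) := by
  refine ⟨1 / 10, by norm_num, 1, one_pos, 36, by norm_num, fun m hm => ?_⟩
  set k := Nat.log 3 (m / 4)
  have hpow : 4 * 3 ^ k ≤ m := by
    have : 3 ^ k ≤ m / 4 := Nat.pow_log_le_self 3 (by omega)
    omega
  obtain ⟨s₀, hs, hodd, hdvd, hs_large⟩ :=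
    exists_sub_odd_dvd (by omega : 1 ≤ μ) (Odd.pow (by decide : Odd 3)) hpow
  have hΔ : k ≤ Delta (μ * m - s₀) := le_Delta_of_pow_dvd Nat.prime_three hodd.pos.ne' hdvd
  have hlog : Real.log m ≤ 5 * k := log_le_five_mul_log_three hm
  have hlog_one : 1 ≤ Real.log m := one_le_log_natCast (by omega)
  have hloglog : Real.log (Real.log m) ≤ Real.log m := Real.log_le_self (by linarith)
  refine ⟨s₀, hs, ?_, ?_⟩
  · rw [padicValNat.eq_zero_of_not_dvd hodd.not_two_dvd_nat, Nat.cast_zero, one_mul]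
    exact Real.log_nonneg hlog_one
  · have hs' : (m : ℝ) ≤ 2 * (s₀ + 1) := by exact_mod_cast hs_large
    have hΔ' : (k : ℝ) ≤ Delta (μ * m - s₀) := by exact_mod_cast hΔ
    push_cast
    calc 1 / 10 * (m : ℝ) * Real.log (Real.log m) ≤ 1 / 10 * m * (5 * k) := by
          gcongr; linarith
      _ = (m : ℝ) / 2 * k := by ring
      _ ≤ (s₀ + 1) * Delta (μ * m - s₀) :=
          mul_le_mul (by linarith) hΔ' (by positivity) (by positivity)
end

section
/- Let λ ∈ (0, 1) and let μ be a real number with μ ≥ 1 and μ·λ < 1. Assume there is a constant K > 0 such that |∑_{k=1}^{N} τ(k) − (N·ln N + (2γ − 1)·N)| ≤ K · N^λ for all integers N ≥ 1, where γ is Euler's constant. Then there exists a constant c > 0 such that for all sufficiently large integers N, max{τ(N + m) : m ∈ ℕ, 1 ≤ m ≤ ⌊N^{1/μ}⌋} > c · ln N; in particular T_N(μ) > c · ln N / τ(N). -/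
/-!
Summing `τ` over the window `(N, N + H]`, `H = ⌊N^{1/μ}⌋`, and subtracting the two divisor-sum
asymptotics at `N + H` and at `N` gives `H log N + O(H) + O(N^λ)`. Since `λ < 1/μ`, the error
`N^λ` is `o(H)`, so the window sum is at least `(H log N) / 2` for large `N`; the maximum of
`τ` over the `H` terms of the window is at least their average.
-/

open Filter Asymptotics Finset

theorem Finset.sum_Icc_one_add_eq_sub {G : Type*} [AddCommGroup G] (f : ℕ → G) (N H : ℕ) :
    ∑ m ∈ Icc 1 H, f (N + m) = ∑ k ∈ Icc 1 (N + H), f k - ∑ k ∈ Icc 1 N, f k := by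
  induction H with
  | zero => simp
  | succ H ih =>
    rw [sum_Icc_succ_top (by omega), ih, ← add_assoc, sum_Icc_succ_top (by omega)]
    abel

theorem Finset.sum_cast_le_card_mul_sup {ι : Type*} (s : Finset ι) (f : ι → ℕ) :
    ∑ i ∈ s, (f i : ℝ) ≤ #s * ((s.sup f : ℕ) : ℝ) := by
  simpa using sum_le_card_nsmul s (fun i => (f i : ℝ)) _ fun i hi => by
    exact_mod_cast le_sup (f := f) hi

theorem Real.add_rpow_le_two_mul_rpow {x y p : ℝ} (hy : 0 ≤ y) (hyx : y ≤ x)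
    (hp₀ : 0 ≤ p) (hp₁ : p ≤ 1) : (x + y) ^ p ≤ 2 * x ^ p := by
  calc (x + y) ^ p ≤ (2 * x) ^ p := Real.rpow_le_rpow (by linarith) (by linarith) hp₀
    _ = 2 ^ p * x ^ p := Real.mul_rpow zero_le_two (by linarith)
    _ ≤ 2 ^ (1 : ℝ) * x ^ p := by
      gcongr
      · exact Real.rpow_nonneg (by linarith) p
      · exact one_le_two
    _ = 2 * x ^ p := by rw [Real.rpow_one]

theorem mul_log_add_mul_sub_le_sum_Icc_add {f : ℕ → ℝ} {a K lam : ℝ} (hK : 0 ≤ K)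
    (hlam₀ : 0 ≤ lam) (hlam₁ : lam ≤ 1)
    (hf : ∀ N : ℕ, 1 ≤ N →
      |∑ k ∈ Icc 1 N, f k - ((N : ℝ) * Real.log N + a * N)| ≤ K * (N : ℝ) ^ lam)
    {N H : ℕ} (hN : 1 ≤ N) (hHN : H ≤ N) :
    H * Real.log N + a * H - 3 * K * (N : ℝ) ^ lam ≤ ∑ m ∈ Icc 1 H, f (N + m) := by
  have hNpos : (0 : ℝ) < N := by exact_mod_cast hN
  have hHR : (H : ℝ) ≤ N := by exact_mod_cast hHN
  have hupper := (abs_le.mp (hf N hN)).2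
  have hlower := (abs_le.mp (hf (N + H) (by omega))).1
  push_cast at hlower
  have hlog : Real.log N ≤ Real.log (N + H) := Real.log_le_log hNpos (by linarith)
  have hmain : ((N : ℝ) + H) * Real.log N ≤ (N + H) * Real.log (N + H) :=
    mul_le_mul_of_nonneg_left hlog (by positivity)
  have herr : K * ((N : ℝ) + H) ^ lam ≤ K * (2 * (N : ℝ) ^ lam) :=
    mul_le_mul_of_nonneg_left
      (Real.add_rpow_le_two_mul_rpow H.cast_nonneg hHR hlam₀ hlam₁) hK
  rw [sum_Icc_one_add_eq_sub]
  nlinarith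

theorem Real.isLittleO_rpow_nat_floor_rpow {lam e : ℝ} (he : 0 < e) (h : lam < e) :
    (fun x : ℝ => x ^ lam) =o[atTop] (fun x : ℝ => (⌊x ^ e⌋₊ : ℝ)) := by
  have hpow : (fun x : ℝ => x ^ lam) =o[atTop] (fun x : ℝ => x ^ e) := by
    rw [isLittleO_iff_tendsto' (eventually_gt_atTop 0 |>.mono fun x hx hx0 =>
      absurd hx0 (Real.rpow_pos_of_pos hx e).ne')]
    refine (tendsto_rpow_neg_atTop (sub_pos.mpr h)).congr' ?_
    filter_upwards [eventually_gt_atTop 0] with x hx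
    rw [← Real.rpow_sub hx, neg_sub]
  have hfloor : (fun x : ℝ => (⌊x ^ e⌋₊ : ℝ)) ~[atTop] fun x => x ^ e :=
    isEquivalent_nat_floor.comp_tendsto (tendsto_rpow_atTop he)
  exact hpow.trans_isBigO hfloor.symm.isBigO

theorem Real.eventually_mul_rpow_le_nat_floor_rpow {lam e : ℝ} (he : 0 < e) (h : lam < e)
    (C : ℝ) : ∀ᶠ x : ℝ in atTop, C * x ^ lam ≤ ⌊x ^ e⌋₊ := by
  filter_upwards [((isLittleO_rpow_nat_floor_rpow he h).const_mul_left C).bound one_pos]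
    with x hx
  rw [one_mul, Real.norm_of_nonneg (Nat.cast_nonneg _)] at hx
  exact (le_abs_self _).trans hx

/-- Assuming a divisor-sum asymptotic with error exponent `λ` satisfying `μ·λ < 1`
(`μ ≥ 1`), there is `c > 0` such that for all sufficiently large `N`,
`max_{1 ≤ m ≤ ⌊N^{1/μ}⌋} τ (N + m) > c · ln N`. -/
theorem max_tau_gt_log (lam : ℝ) (hlam : lam ∈ Set.Ioo (0 : ℝ) 1)
    (μ : ℝ) (hμ : 1 ≤ μ) (hμlam : μ * lam < 1)
    (K : ℝ) (hK : 0 < K)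
    (hsum : ∀ N : ℕ, 1 ≤ N →
      |(∑ k ∈ Finset.Icc 1 N, (tau k : ℝ)) -
        ((N : ℝ) * Real.log N + (2 * Real.eulerMascheroniConstant - 1) * N)|
        ≤ K * (N : ℝ) ^ lam) :
    ∃ c : ℝ, 0 < c ∧ ∃ N₀ : ℕ, ∀ N : ℕ, N₀ ≤ N →
      (((Finset.Icc 1 ⌊(N : ℝ) ^ (1 / μ)⌋₊).sup (fun m => tau (N + m)) : ℕ) : ℝ)
        > c * Real.log N := by
  obtain ⟨hlam₀, hlam₁⟩ := hlam
  have hlam_lt : lam < 1 / μ := by rw [lt_div_iff₀ (by linarith)]; linarith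
  set a := 2 * Real.eulerMascheroniConstant - 1
  -- `3K N^λ ≤ H/4` and `|a| ≤ (log N)/4` each cost at most a quarter of `H log N`.
  have hwindow := tendsto_natCast_atTop_atTop.eventually
    (Real.eventually_mul_rpow_le_nat_floor_rpow (by positivity) hlam_lt (12 * K))
  have hlog := (Real.tendsto_log_atTop.comp tendsto_natCast_atTop_atTop).eventually_ge_atTop
    (4 * |a| + 1)
  obtain ⟨N₀, hN₀⟩ := eventually_atTop.mp (hwindow.and (hlog.and (eventually_ge_atTop 1)))
  refine ⟨1 / 4, by norm_num, N₀, fun N hN => ?_⟩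
  obtain ⟨herr, hlogN, hN1⟩ := hN₀ N hN
  simp only [Function.comp_apply] at hlogN
  set H := ⌊(N : ℝ) ^ (1 / μ)⌋₊
  set s := (Icc 1 H).sup fun m => tau (N + m)
  have hNpow : 0 < (N : ℝ) ^ lam := Real.rpow_pos_of_pos (by exact_mod_cast hN1) lam
  have hH : (0 : ℝ) < H := by nlinarith
  have hHN : H ≤ N := Nat.floor_le_of_le
    (Real.rpow_le_self_of_one_le (by exact_mod_cast hN1) (by rw [div_le_one] <;> linarith))
  have hlower := mul_log_add_mul_sub_le_sum_Icc_add hK.le hlam₀.le hlam₁.le hsum hN1 hHN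
  have hupper := sum_cast_le_card_mul_sup (Icc 1 H) fun m => tau (N + m)
  rw [Nat.card_Icc, Nat.add_sub_cancel] at hupper
  have hhalf : H * (Real.log N / 2) ≤ H * s := by
    nlinarith [mul_nonneg hH.le (neg_abs_le a |> neg_le_iff_add_nonneg.mp), abs_nonneg a]
  have hs := le_of_mul_le_mul_left hhalf hH
  linarith [abs_nonneg a]
end

section
/- Let λ ∈ (0, 1) and let μ be a real number with μ ≥ 1 and μ·λ < 1. Assume there is a constant K > 0 such that |∑_{k=1}^{N} τ(k) − (N·ln N + (2γ − 1)·N)| ≤ K · N^λ for all integers N ≥ 1, where γ is Euler's constant. Then there exists a constant C > 0 such that for all integers N ≥ 2, |∑_{k=N+1}^{N+⌊N^{1/μ}⌋} τ(k) − N^{1/μ} · ln N| ≤ C · N^{1/μ}. -/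
/-!
Write `S n = ∑_{k ≤ n} τ k = D n + E n` with `D t = t log t + (2γ - 1) t` and `|E n| ≤ K n^λ`.
With `x = N^{1/μ}` and `M = ⌊x⌋ ≤ N`, the short sum is `S (N + M) - S N`. The main terms give
`D (N + M) - D N = M log N + O(M)`, since `(N + M) log (1 + M/N) ≤ 2M`; replacing `M` by `x`
costs at most `log N ≤ μ x`; and the two error terms are `O(N^λ) = O(x)` because `λ ≤ 1/μ`.
-/

open Real Finset

theorem sum_Icc_add_eq_sub {G : Type*} [AddCommGroup G] (f : ℕ → G) (N M : ℕ) :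
    ∑ k ∈ Icc (N + 1) (N + M), f k = ∑ k ∈ Icc 1 (N + M), f k - ∑ k ∈ Icc 1 N, f k := by
  have hIcc_one (n : ℕ) : Icc 1 n = Ioc 0 n := by rw [← Icc_add_one_left_eq_Ioc, zero_add]
  rw [hIcc_one, hIcc_one, Icc_add_one_left_eq_Ioc, eq_sub_iff_add_eq',
    sum_Ioc_consecutive f (Nat.zero_le N) (Nat.le_add_right N M)]

theorem abs_add_mul_log_add_sub_le {a h : ℝ} (ha : 0 < a) (hh : 0 ≤ h) :
    |(a + h) * log (a + h) - a * log a - h * log a| ≤ h * (a + h) / a := by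
  have hah : 0 < a + h := by linarith
  have hdiff : (a + h) * log (a + h) - a * log a - h * log a = (a + h) * log ((a + h) / a) := by
    rw [log_div hah.ne' ha.ne']; ring
  have hlog_nonneg : 0 ≤ log ((a + h) / a) := log_nonneg (by rw [le_div_iff₀ ha]; linarith)
  have hlog_le : log ((a + h) / a) ≤ h / a := calc
    log ((a + h) / a) ≤ (a + h) / a - 1 := log_le_sub_one_of_pos (div_pos hah ha)
    _ = h / a := by field_simp; ring
  rw [hdiff, abs_of_nonneg (mul_nonneg hah.le hlog_nonneg), mul_comm h, mul_div_assoc]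
  exact mul_le_mul_of_nonneg_left hlog_le hah.le

theorem abs_sub_mul_log_le_of_asymptotic {S : ℕ → ℝ} {c K lam : ℝ} (hlam0 : 0 ≤ lam)
    (hlam1 : lam ≤ 1) (hK : 0 ≤ K)
    (hS : ∀ n : ℕ, 1 ≤ n → |S n - (n * log n + c * n)| ≤ K * (n : ℝ) ^ lam)
    {N M : ℕ} (hN : 1 ≤ N) (hMN : M ≤ N) :
    |S (N + M) - S N - M * log N| ≤ 3 * K * (N : ℝ) ^ lam + (2 + |c|) * M := by
  have hN0 : (0 : ℝ) < N := by exact_mod_cast hN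
  have hMN' : (M : ℝ) ≤ N := by exact_mod_cast hMN
  have hM0 : (0 : ℝ) ≤ M := M.cast_nonneg
  have herr_far : |S (N + M) - ((N + M : ℕ) * log (N + M : ℕ) + c * (N + M : ℕ))|
      ≤ 2 * K * (N : ℝ) ^ lam := by
    have h2N : ((N + M : ℕ) : ℝ) ^ lam ≤ 2 * (N : ℝ) ^ lam := calc
      ((N + M : ℕ) : ℝ) ^ lam ≤ (2 * N : ℝ) ^ lam := by
        gcongr; push_cast; linarith
      _ = (2 : ℝ) ^ lam * (N : ℝ) ^ lam := mul_rpow zero_le_two hN0.le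
      _ ≤ 2 * (N : ℝ) ^ lam := by
        gcongr; exact rpow_le_self_of_one_le one_le_two hlam1
    calc _ ≤ K * ((N + M : ℕ) : ℝ) ^ lam := hS (N + M) (by omega)
      _ ≤ K * (2 * (N : ℝ) ^ lam) := by gcongr
      _ = 2 * K * (N : ℝ) ^ lam := by ring
  have herr_near := hS N hN
  have hmain : |((N : ℝ) + M) * log (N + M) - N * log N - M * log N| ≤ 2 * M := by
    refine (abs_add_mul_log_add_sub_le hN0 hM0).trans ?_
    rw [div_le_iff₀ hN0]; nlinarith
  have hlinear : |c * M| = |c| * M := by rw [abs_mul, abs_of_nonneg hM0]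
  push_cast at herr_far
  set errFar := S (N + M) - ((N + M) * log (N + M) + c * (N + M))
  set errNear := S N - (N * log N + c * N)
  set incr := ((N : ℝ) + M) * log (N + M) - N * log N - M * log N
  have hdecomp : S (N + M) - S N - M * log N = errFar + -errNear + incr + c * M := by
    simp only [errFar, errNear, incr]; ring
  rw [hdecomp]
  calc _ ≤ |errFar| + |-errNear| + |incr| + |c * M| := by
        grw [abs_add_le, abs_add_three]
    _ ≤ 2 * K * (N : ℝ) ^ lam + K * (N : ℝ) ^ lam + 2 * M + |c| * M := by
        rw [abs_neg, hlinear]; gcongr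
    _ = 3 * K * (N : ℝ) ^ lam + (2 + |c|) * M := by ring

/-- Assuming a divisor-sum asymptotic with error exponent `λ` satisfying `μ·λ < 1`
(`μ ≥ 1`), there is `C > 0` such that for all `N ≥ 2`,
`|∑_{k=N+1}^{N+⌊N^{1/μ}⌋} τ k − N^{1/μ} ln N| ≤ C · N^{1/μ}`. -/
theorem short_interval_divisor_sum (lam : ℝ) (hlam : lam ∈ Set.Ioo (0 : ℝ) 1)
    (μ : ℝ) (hμ : 1 ≤ μ) (hμlam : μ * lam < 1)
    (K : ℝ) (hK : 0 < K)
    (hsum : ∀ N : ℕ, 1 ≤ N →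
      |(∑ k ∈ Finset.Icc 1 N, (tau k : ℝ)) -
        ((N : ℝ) * Real.log N + (2 * Real.eulerMascheroniConstant - 1) * N)|
        ≤ K * (N : ℝ) ^ lam) :
    ∃ C : ℝ, 0 < C ∧ ∀ N : ℕ, 2 ≤ N →
      |(∑ k ∈ Finset.Icc (N + 1) (N + ⌊(N : ℝ) ^ (1 / μ)⌋₊), (tau k : ℝ)) -
        (N : ℝ) ^ (1 / μ) * Real.log N| ≤ C * (N : ℝ) ^ (1 / μ) := by
  obtain ⟨hlam0, hlam1⟩ := hlam
  set c := 2 * eulerMascheroniConstant - 1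
  have hμ0 : 0 < μ := by linarith
  have hlam_le : lam ≤ 1 / μ := by rw [le_div_iff₀ hμ0]; linarith
  refine ⟨3 * K + 2 + |c| + μ, by linarith [abs_nonneg c], fun N hN => ?_⟩
  set x := (N : ℝ) ^ (1 / μ)
  set M := ⌊x⌋₊
  have hN1 : (1 : ℝ) ≤ N := by exact_mod_cast (by omega : 1 ≤ N)
  have hxN : x ≤ N := rpow_le_self_of_one_le hN1 (by rw [div_le_one hμ0]; exact hμ)
  have hMx : (M : ℝ) ≤ x := Nat.floor_le (by positivity)
  have hx_sub_M : |x - M| ≤ 1 := by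
    rw [abs_of_nonneg (by linarith)]; linarith [Nat.lt_floor_add_one x]
  have hNlam : (N : ℝ) ^ lam ≤ x := rpow_le_rpow_of_exponent_le hN1 hlam_le
  have hlogN : log N ≤ μ * x := calc
    log N ≤ x / (1 / μ) := log_le_rpow_div N.cast_nonneg (one_div_pos.2 hμ0)
    _ = μ * x := by field_simp
  have hshort := abs_sub_mul_log_le_of_asymptotic hlam0.le hlam1.le hK.le hsum
    (by omega : 1 ≤ N) (by exact_mod_cast hMx.trans hxN : M ≤ N)
  rw [sum_Icc_add_eq_sub]
  set D := ∑ k ∈ Icc 1 (N + M), (tau k : ℝ) - ∑ k ∈ Icc 1 N, (tau k : ℝ) - M * log N with hD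
  calc _ = |D - (x - M) * log N| := by rw [hD]; congr 1; ring
    _ ≤ |D| + |x - M| * log N :=
        (abs_sub _ _).trans_eq (by rw [abs_mul, abs_of_nonneg (log_nonneg hN1)])
    _ ≤ 3 * K * (N : ℝ) ^ lam + (2 + |c|) * M + 1 * (μ * x) :=
        add_le_add hshort (mul_le_mul hx_sub_M hlogN (log_nonneg hN1) zero_le_one)
    _ ≤ 3 * K * x + (2 + |c|) * x + 1 * (μ * x) := by gcongr
    _ = (3 * K + 2 + |c| + μ) * x := by ring
end
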